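/- arXiv:1611.02072 — 7 statements merged into one kernel-verified Lean document; each statement's English description precedes it below -/
import Mathlib

section
/- Let h₁,…,h_K : ℂ → ℂ, let Ã₁,…,Ã_K be n×n complex matrices, B̃ ∈ ℂ^{n×m}, C̃ ∈ ℂ^{p×n}, and define K̃(s) = Σ_k h_k(s) Ã_k and H̃(s) = C̃ K̃(s)⁻¹ B̃. Let μ₁,…,μ_n ∈ ℂ with K̃(μᵢ) invertible for all i, let L = [ℓ₁ … ℓ_n] ∈ ℂ^{p×n}, F = [f₁ … f_n] ∈ ℂ^{m×n}, and let M = diag(μ₁,…,μ_n). Then the left interpolation conditions ℓᵢᵀ H̃(μᵢ) = fᵢᵀ hold for all i if and only if there exists a matrix P_F ∈ ℂ^{n×n} with Fᵀ = P_Fᵀ B̃ and Σ_k h_k(M) P_Fᵀ Ã_k = Lᵀ C̃, where h_k(M) = diag(h_k(μ₁),…,h_k(μ_n)). -/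
open Matrix BigOperators

namespace Matrix

variable {κ l m n R : Type*} [Fintype l] [Fintype m] [DecidableEq m]

theorem sum_diagonal_mul_mul_apply [Fintype κ] [CommSemiring R] (d : κ → m → R)
    (Y : Matrix m l R) (A : κ → Matrix l n R) (i : m) :
    (∑ k, diagonal (d k) * Y * A k) i = Y i ᵥ* ∑ k, d k i • A k := by
  erw [Finset.sum_apply, vecMul_sum]
  refine Finset.sum_congr rfl fun k _ => ?_
  have hrow : (diagonal (d k) * Y) i = d k i • Y i := funext fun j => diagonal_mul _ _ _ _
  rw [mul_apply_eq_vecMul, hrow, smul_vecMul, vecMul_smul]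

theorem vecMul_eq_iff_eq_vecMul_nonsing_inv [CommRing R] {M : Matrix m m R} (hM : IsUnit M.det)
    (v w : m → R) : v ᵥ* M = w ↔ v = w ᵥ* M⁻¹ := by
  constructor
  · rintro rfl
    rw [vecMul_vecMul, mul_nonsing_inv _ hM, vecMul_one]
  · rintro rfl
    rw [vecMul_vecMul, nonsing_inv_mul _ hM, vecMul_one]

end Matrix

/-- Characterization of the left interpolation conditions for a structured realization. -/
theorem stmt5 {n m p K : ℕ} (h : Fin K → ℂ → ℂ)
    (A : Fin K → Matrix (Fin n) (Fin n) ℂ)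
    (B : Matrix (Fin n) (Fin m) ℂ) (C : Matrix (Fin p) (Fin n) ℂ)
    (μ : Fin n → ℂ)
    (L : Matrix (Fin p) (Fin n) ℂ) (F : Matrix (Fin m) (Fin n) ℂ)
    (hinv : ∀ i, IsUnit (∑ k, h k (μ i) • A k).det) :
    (∀ i, (Lᵀ i) ᵥ* (C * (∑ k, h k (μ i) • A k)⁻¹ * B) = Fᵀ i) ↔
      (∃ PF : Matrix (Fin n) (Fin n) ℂ, Fᵀ = PFᵀ * B ∧
        ∑ k, Matrix.diagonal (fun i => h k (μ i)) * PFᵀ * A k = Lᵀ * C) := by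
  -- Row `i` of the second condition reads `PFᵀ i ᵥ* K̃(μ i) = Lᵀ i ᵥ* C`, so it determines `PF`.
  set Q : Matrix (Fin n) (Fin n) ℂ := fun i => (Lᵀ i ᵥ* C) ᵥ* (∑ k, h k (μ i) • A k)⁻¹
  have hPF : ∀ PF : Matrix (Fin n) (Fin n) ℂ,
      ∑ k, diagonal (fun i => h k (μ i)) * PFᵀ * A k = Lᵀ * C ↔ PFᵀ = Q := by
    intro PF
    rw [← Matrix.ext_iff, ← Matrix.ext_iff]
    simp only [← funext_iff, sum_diagonal_mul_mul_apply, vecMul_eq_iff_eq_vecMul_nonsing_inv (hinv _),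
      mul_apply_eq_vecMul, Q]
  have hexists : (∃ PF : Matrix (Fin n) (Fin n) ℂ, Fᵀ = PFᵀ * B ∧
      ∑ k, diagonal (fun i => h k (μ i)) * PFᵀ * A k = Lᵀ * C) ↔ Fᵀ = Q * B :=
    ⟨fun ⟨PF, hB, hA⟩ => (hPF PF).1 hA ▸ hB,
      fun hB => ⟨Qᵀ, by rwa [transpose_transpose], (hPF Qᵀ).2 (transpose_transpose Q)⟩⟩
  rw [hexists, ← Matrix.ext_iff]
  simp only [← funext_iff, mul_apply_eq_vecMul]
  simp only [Q, vecMul_vecMul, eq_comm]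
end

section
/- Let h₁,…,h_K : ℂ → ℂ, Ã_k ∈ ℂ^{n×n}, B̃ ∈ ℂ^{n×m}, C̃ ∈ ℂ^{p×n}, K̃(s) = Σ_k h_k(s) Ã_k, H̃(s) = C̃ K̃(s)⁻¹ B̃. Let σ₁,…,σ_n ∈ ℂ with K̃(σᵢ) invertible for all i, R = [r₁ … r_n] ∈ ℂ^{m×n}, G = [g₁ … g_n] ∈ ℂ^{p×n}, S = diag(σ₁,…,σ_n). Then H̃(σᵢ) rᵢ = gᵢ for all i if and only if there exists P_G ∈ ℂ^{n×n} with G = C̃ P_G and Σ_k Ã_k P_G h_k(S) = B̃ R. -/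
open Matrix BigOperators

/-! Column `i` of `∑ₖ Aₖ P hₖ(S)` is `K̃(σᵢ) pᵢ`, where `pᵢ` is column `i` of `P`. Hence the
Sylvester-type equation says exactly that `pᵢ = K̃(σᵢ)⁻¹ B̃ rᵢ` for every `i`, and then column `i`
of `C̃ P` is `H̃(σᵢ) rᵢ`; so `P_G` is forced to be the matrix with these columns. -/

namespace Matrix

variable {ι l m n α : Type*}

theorem ext_iff_transpose_apply {M N : Matrix m n α} : M = N ↔ ∀ j, Mᵀ j = Nᵀ j :=
  transpose_inj.symm.trans funext_iff

theorem transpose_mul_apply [Fintype m] [NonUnitalNonAssocSemiring α] (M : Matrix l m α)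
    (N : Matrix m n α) (j : n) : (M * N)ᵀ j = M *ᵥ Nᵀ j :=
  rfl

theorem transpose_sum_mul_mul_diagonal_apply [Fintype ι] [Fintype m] [Fintype n] [DecidableEq n]
    [CommSemiring α]
    (A : ι → Matrix m m α) (P : Matrix m n α) (d : ι → n → α) (j : n) :
    (∑ k, A k * P * diagonal (d k))ᵀ j = (∑ k, d k j • A k) *ᵥ Pᵀ j := by
  ext i
  simp only [transpose_apply, sum_apply, mul_diagonal, sum_mulVec, smul_mulVec, Finset.sum_apply,
    Pi.smul_apply, smul_eq_mul]
  exact Finset.sum_congr rfl fun k _ => mul_comm _ _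

theorem mulVec_eq_iff_eq_nonsing_inv_mulVec [Fintype n] [DecidableEq n] [CommRing α]
    {M : Matrix n n α} (hM : IsUnit M.det) {x b : n → α} : M *ᵥ x = b ↔ x = M⁻¹ *ᵥ b := by
  constructor
  · rintro rfl
    rw [mulVec_mulVec, nonsing_inv_mul _ hM, one_mulVec]
  · rintro rfl
    rw [mulVec_mulVec, mul_nonsing_inv _ hM, one_mulVec]

end Matrix

/-- Characterization of the right interpolation conditions for a structured realization. -/
theorem stmt6 {n m p K : ℕ} (h : Fin K → ℂ → ℂ)
    (A : Fin K → Matrix (Fin n) (Fin n) ℂ)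
    (B : Matrix (Fin n) (Fin m) ℂ) (C : Matrix (Fin p) (Fin n) ℂ)
    (σ : Fin n → ℂ)
    (R : Matrix (Fin m) (Fin n) ℂ) (G : Matrix (Fin p) (Fin n) ℂ)
    (hinv : ∀ i, IsUnit (∑ k, h k (σ i) • A k).det) :
    (∀ i, (C * (∑ k, h k (σ i) • A k)⁻¹ * B) *ᵥ (Rᵀ i) = Gᵀ i) ↔
      (∃ PG : Matrix (Fin n) (Fin n) ℂ, G = C * PG ∧
        ∑ k, A k * PG * Matrix.diagonal (fun i => h k (σ i)) = B * R) := by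
  set Kσ : Fin n → Matrix (Fin n) (Fin n) ℂ := fun i => ∑ k, h k (σ i) • A k
  have hcols : ∀ PG : Matrix (Fin n) (Fin n) ℂ,
      ∑ k, A k * PG * diagonal (fun i => h k (σ i)) = B * R ↔
        ∀ i, PGᵀ i = (Kσ i)⁻¹ *ᵥ B *ᵥ Rᵀ i := by
    intro PG
    refine ext_iff_transpose_apply.trans (forall_congr' fun i => ?_)
    rw [transpose_sum_mul_mul_diagonal_apply, transpose_mul_apply,
      mulVec_eq_iff_eq_nonsing_inv_mulVec (hinv i)]
  simp only [hcols, ← mulVec_mulVec]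
  constructor
  · intro hinterp
    refine ⟨(of fun i => (Kσ i)⁻¹ *ᵥ B *ᵥ Rᵀ i)ᵀ, ?_, fun i => rfl⟩
    exact ext_iff_transpose_apply.2 fun i => (hinterp i).symm
  · rintro ⟨PG, rfl, hPG⟩ i
    rw [transpose_mul_apply, hPG]
end

section
/- Suppose P_F and P_G are invertible n×n matrices satisfying G = C̃ P_G and Fᵀ = P_Fᵀ B̃, together with K̃(σᵢ) P_G eᵢ = B̃ rᵢ and K̃(μᵢ)ᵀ P_F eᵢ = C̃ᵀ ℓᵢ. Then for every s at which K̃(s) is invertible, C̃ K̃(s)⁻¹ B̃ = G (P_Fᵀ K̃(s) P_G)⁻¹ Fᵀ. -/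
open Matrix BigOperators

theorem Matrix.mul_mul_inv_mul_mul_eq_of_isUnit_det {R : Type*} [CommRing R]
    {k l m : Type*} [Fintype m] [DecidableEq m]
    (C : Matrix k m R) (K P Q : Matrix m m R) (B : Matrix m l R)
    (hP : IsUnit P.det) (hQ : IsUnit Q.det) :
    C * P * (Q * K * P)⁻¹ * (Q * B) = C * K⁻¹ * B := by
  rw [mul_inv_rev, mul_inv_rev]
  calc C * P * (P⁻¹ * (K⁻¹ * Q⁻¹)) * (Q * B)
      = C * (P * P⁻¹) * K⁻¹ * (Q⁻¹ * Q) * B := by simp only [Matrix.mul_assoc]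
    _ = C * K⁻¹ * B := by
      rw [mul_nonsing_inv P hP, nonsing_inv_mul Q hQ, Matrix.mul_one, Matrix.mul_one]

theorem stmt7_general {n m p : ℕ} (K : ℂ → Matrix (Fin n) (Fin n) ℂ)
    (B : Matrix (Fin n) (Fin m) ℂ) (C : Matrix (Fin p) (Fin n) ℂ)
    (PF PG : Matrix (Fin n) (Fin n) ℂ)
    (G : Matrix (Fin p) (Fin n) ℂ) (F : Matrix (Fin m) (Fin n) ℂ)
    (hPF : IsUnit PF.det) (hPG : IsUnit PG.det)
    (hG : G = C * PG) (hF : Fᵀ = PFᵀ * B) :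
    ∀ s : ℂ, IsUnit (K s).det →
      C * (K s)⁻¹ * B = G * (PFᵀ * K s * PG)⁻¹ * Fᵀ := by
  intro s _
  rw [hG, hF, mul_mul_inv_mul_mul_eq_of_isUnit_det C (K s) PG PFᵀ B hPG
    (by rwa [det_transpose])]

/-- Uniqueness of the realization up to the state-space transformation `P_F`, `P_G`. -/
theorem stmt7 {n m p : ℕ} (K : ℂ → Matrix (Fin n) (Fin n) ℂ)
    (B : Matrix (Fin n) (Fin m) ℂ) (C : Matrix (Fin p) (Fin n) ℂ)
    (PF PG : Matrix (Fin n) (Fin n) ℂ)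
    (G : Matrix (Fin p) (Fin n) ℂ) (F : Matrix (Fin m) (Fin n) ℂ)
    (μ σ : Fin n → ℂ) (r : Fin n → Fin m → ℂ) (l : Fin n → Fin p → ℂ)
    (hPF : IsUnit PF.det) (hPG : IsUnit PG.det)
    (hG : G = C * PG) (hF : Fᵀ = PFᵀ * B)
    (hcolG : ∀ i, (K (σ i)) *ᵥ (PGᵀ i) = B *ᵥ (r i))
    (hcolF : ∀ i, (K (μ i))ᵀ *ᵥ (PFᵀ i) = Cᵀ *ᵥ (l i)) :
    ∀ s : ℂ, IsUnit (K s).det →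
      C * (K s)⁻¹ * B = G * (PFᵀ * K s * PG)⁻¹ * Fᵀ :=
  stmt7_general K B C PF PG G F hPF hPG hG hF
end

section
/- For the SISO standard state-space case K̃(s) = s·I_n − Ã with b, c ∈ ℂ^n, and distinct points σ₁,…,σ_n at which K̃ is invertible, the matrix P_G whose i-th column is K̃(σᵢ)⁻¹ b satisfies rank(P_G) = rank([b, Ãb, …, Ã^{n−1} b]). In particular, P_G is invertible if and only if the pair (Ã, b) is controllable. -/
/-!
Dividing the characteristic polynomial `χ` of `A` by `X - s` gives `χ = χ(s) + (X - s) q_s`, so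
by Cayley–Hamilton `(s - A)⁻¹ = χ(s)⁻¹ q_s(A)` with `deg q_s < n`. Hence `(σᵢ - A)⁻¹ b` is the
combination of `b, A b, …, A^(n-1) b` with the coefficients of `χ(σᵢ)⁻¹ q_{σᵢ}`, and the `k`-th
coefficient of `q_s` is `∑ₘ χ_{k+m+1} sᵐ`. This factors `P_G = Kr · H · Vᵀ · D` with
`H = (χ_{k+m+1})` a Hankel matrix that is triangular up to reversal with unit anti-diagonal
(`χ` is monic), `V` the Vandermonde matrix of the distinct `σᵢ` and `D = diag(χ(σᵢ)⁻¹)`. All three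
factors are invertible, so `P_G` and `Kr` have the same rank.
-/

open Matrix Polynomial Finset

theorem Polynomial.coeff_divByMonic_X_sub_C_eq_sum_range {R : Type*} [CommRing R]
    (p : R[X]) (a : R) {k N : ℕ} (h : p.natDegree ≤ k + N) :
    (p /ₘ (X - C a)).coeff k = ∑ m ∈ range N, p.coeff (k + m + 1) * a ^ m := by
  induction N generalizing k with
  | zero =>
    rw [coeff_divByMonic_X_sub_C, Icc_eq_empty (by omega), sum_empty, sum_range_zero]
  | succ N ih =>
    rw [coeff_divByMonic_X_sub_C_rec, ih (by omega), sum_range_succ', mul_sum, add_comm]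
    simp only [add_zero, pow_zero, mul_one, pow_succ]
    congr 1
    refine sum_congr rfl fun m _ => ?_
    rw [show k + 1 + m + 1 = k + (m + 1) + 1 by omega]
    ring

namespace Matrix

section CommRing

variable {R : Type*} [CommRing R]

def coeffHankel (p : R[X]) (n : ℕ) : Matrix (Fin n) (Fin n) R :=
  of fun k m => p.coeff (k + m + 1)

theorem coeffHankel_mulVec_pow {p : R[X]} {n : ℕ} (hp : p.natDegree ≤ n) (a : R) (k : Fin n) :
    (coeffHankel p n *ᵥ fun m => a ^ (m : ℕ)) k = (p /ₘ (X - C a)).coeff k := by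
  rw [coeff_divByMonic_X_sub_C_eq_sum_range p a (N := n) (by omega),
    ← Fin.sum_univ_eq_sum_range (fun m => p.coeff (k + m + 1) * a ^ m)]
  rfl

theorem isUnit_det_coeffHankel {p : R[X]} (hmonic : p.Monic) {n : ℕ} (hn : p.natDegree = n) :
    IsUnit (coeffHankel p n).det := by
  have htri : ((coeffHankel p n).submatrix id Fin.revPerm).IsUpperTriangular := by
    intro k m hmk
    refine coeff_eq_zero_of_natDegree_lt ?_
    simp only [id, Fin.revPerm_apply, Fin.val_rev]
    have : (m : ℕ) < k := hmk
    omega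
  have hdet : ((coeffHankel p n).submatrix id Fin.revPerm).det = 1 := by
    rw [det_of_isUpperTriangular htri]
    refine prod_eq_one fun k _ => ?_
    simp only [submatrix_apply, id, coeffHankel, of_apply, Fin.revPerm_apply, Fin.val_rev]
    rw [show (k : ℕ) + (n - (k + 1)) + 1 = p.natDegree by omega]
    exact hmonic
  rw [det_permute'] at hdet
  exact .of_mul_eq_one_right _ hdet

theorem smul_one_sub_mul_aeval_divByMonic_charpoly {m : Type*} [Fintype m] [DecidableEq m]
    (A : Matrix m m R) (s : R) :
    (s • 1 - A) * aeval A (A.charpoly /ₘ (X - C s)) = A.charpoly.eval s • 1 := by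
  have h := congrArg (aeval A) (A.charpoly.modByMonic_add_div (X - C s))
  rw [modByMonic_X_sub_C_eq_C_eval, map_add, map_mul, aeval_self_charpoly, aeval_C,
    map_sub, aeval_X, aeval_C, Algebra.algebraMap_eq_smul_one,
    Algebra.algebraMap_eq_smul_one] at h
  rw [← neg_sub, neg_mul, neg_eq_iff_eq_neg]
  exact (neg_eq_of_add_eq_zero_right h).symm

theorem mulVec_coeff_eq_aeval_mulVec {n : ℕ} {A Kr : Matrix (Fin n) (Fin n) R} {b : Fin n → R}
    (hKr : ∀ k, Krᵀ k = A ^ (k : ℕ) *ᵥ b) {p : R[X]} (hp : p.degree < n) :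
    (Kr *ᵥ fun k => p.coeff k) = aeval A p *ᵥ b := by
  rcases eq_or_ne p 0 with rfl | hp0
  · simp only [coeff_zero, map_zero, zero_mulVec]
    exact mulVec_zero Kr
  rw [aeval_eq_sum_range' ((natDegree_lt_iff_degree_lt hp0).2 hp), sum_mulVec]
  simp only [smul_mulVec]
  rw [← Fin.sum_univ_eq_sum_range (fun k => p.coeff k • A ^ k *ᵥ b), mulVec_eq_sum]
  simp only [hKr, op_smul_eq_smul]

end CommRing

section Field

variable {K : Type*} [Field K] {n : ℕ}

theorem inv_smul_one_sub_eq {m : Type*} [Fintype m] [DecidableEq m] (A : Matrix m m K) {s : K}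
    (hs : A.charpoly.eval s ≠ 0) :
    (s • 1 - A)⁻¹ = (A.charpoly.eval s)⁻¹ • aeval A (A.charpoly /ₘ (X - C s)) := by
  refine inv_eq_right_inv ?_
  rw [mul_smul_comm, smul_one_sub_mul_aeval_divByMonic_charpoly, smul_smul, inv_mul_cancel₀ hs,
    one_smul]

theorem inv_smul_one_sub_mulVec_eq {A Kr : Matrix (Fin n) (Fin n) K} {b : Fin n → K}
    (hKr : ∀ k, Krᵀ k = A ^ (k : ℕ) *ᵥ b) {s : K} (hs : A.charpoly.eval s ≠ 0) :
    (s • 1 - A)⁻¹ *ᵥ b =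
      Kr *ᵥ ((A.charpoly.eval s)⁻¹ • (coeffHankel A.charpoly n *ᵥ fun m => s ^ (m : ℕ))) := by
  have hdeg : A.charpoly.natDegree = n := by rw [charpoly_natDegree_eq_dim, Fintype.card_fin]
  have hlt : (A.charpoly /ₘ (X - C s)).degree < n := calc
    _ < A.charpoly.degree := degree_divByMonic_lt _ _ (charpoly_monic A).ne_zero
      (by rw [degree_X_sub_C]; exact one_pos)
    _ = n := by rw [charpoly_degree_eq_dim, Fintype.card_fin]
  have hcoeff : (coeffHankel A.charpoly n *ᵥ fun m => s ^ (m : ℕ)) =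
      fun k : Fin n => (A.charpoly /ₘ (X - C s)).coeff k :=
    funext (coeffHankel_mulVec_pow hdeg.le s)
  rw [inv_smul_one_sub_eq A hs, smul_mulVec, mulVec_smul, hcoeff,
    mulVec_coeff_eq_aeval_mulVec hKr hlt]

theorem eq_mul_coeffHankel_mul_vandermonde {A Kr PG : Matrix (Fin n) (Fin n) K} {b : Fin n → K}
    {σ : Fin n → K} (hKr : ∀ k, Krᵀ k = A ^ (k : ℕ) *ᵥ b)
    (hσ : ∀ i, A.charpoly.eval (σ i) ≠ 0) (hPG : ∀ i, PGᵀ i = (σ i • 1 - A)⁻¹ *ᵥ b) :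
    PG = Kr * (coeffHankel A.charpoly n * (vandermonde σ)ᵀ *
      diagonal fun i => (A.charpoly.eval (σ i))⁻¹) := by
  ext r i
  have hcol := congrFun (hPG i) r
  rw [transpose_apply, inv_smul_one_sub_mulVec_eq hKr (hσ i)] at hcol
  rw [hcol]
  simp only [mulVec, dotProduct, mul_apply, diagonal_apply, mul_ite, mul_zero, sum_ite_eq',
    mem_univ, if_true, transpose_apply, vandermonde_apply, Pi.smul_apply, smul_eq_mul]
  exact sum_congr rfl fun k _ => by ring

theorem isUnit_det_iff_rank_eq {m : Type*} [Fintype m] [DecidableEq m] (A : Matrix m m K) :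
    IsUnit A.det ↔ A.rank = Fintype.card m := by
  refine ⟨fun h => rank_of_isUnit A ((isUnit_iff_isUnit_det A).2 h), fun h => ?_⟩
  rw [← isUnit_iff_isUnit_det, ← isUnit_toLin'_iff, LinearMap.isUnit_iff_range_eq_top]
  exact Submodule.eq_top_of_finrank_eq (by rwa [Module.finrank_fintype_fun_eq_card])

end Field

end Matrix

/-- Nonsingularity of `P_G` is equivalent to controllability in the SISO
standard state-space case. -/
theorem stmt8 {n : ℕ} (A : Matrix (Fin n) (Fin n) ℂ) (b : Fin n → ℂ)
    (σ : Fin n → ℂ) (hdist : Function.Injective σ)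
    (hinv : ∀ i, IsUnit (σ i • (1 : Matrix (Fin n) (Fin n) ℂ) - A).det)
    (PG : Matrix (Fin n) (Fin n) ℂ)
    (hPG : ∀ i, PGᵀ i = (σ i • (1 : Matrix (Fin n) (Fin n) ℂ) - A)⁻¹ *ᵥ b)
    (Kr : Matrix (Fin n) (Fin n) ℂ)
    (hKr : ∀ i, Krᵀ i = (A ^ (i : ℕ)) *ᵥ b) :
    PG.rank = Kr.rank ∧ (IsUnit PG.det ↔ Kr.rank = n) := by
  have hσ : ∀ i, A.charpoly.eval (σ i) ≠ 0 := fun i => by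
    rw [eval_charpoly, scalar_apply, ← smul_one_eq_diagonal]
    exact (hinv i).ne_zero
  have hM : IsUnit (coeffHankel A.charpoly n * (vandermonde σ)ᵀ *
      diagonal fun i => (A.charpoly.eval (σ i))⁻¹).det := by
    rw [det_mul, det_mul, det_transpose, det_diagonal]
    refine ((isUnit_det_coeffHankel (charpoly_monic A) ?_).mul
      (det_vandermonde_ne_zero_iff.2 hdist).isUnit).mul ?_
    · rw [charpoly_natDegree_eq_dim, Fintype.card_fin]
    · exact (prod_ne_zero_iff.2 fun i _ => inv_ne_zero (hσ i)).isUnit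
  rw [eq_mul_coeffHankel_mul_vandermonde hKr hσ hPG, rank_mul_eq_left_of_isUnit_det _ _ hM,
    det_mul, IsUnit.mul_iff, and_iff_left hM, isUnit_det_iff_rank_eq, Fintype.card_fin]
  exact ⟨rfl, Iff.rfl⟩
end

section
/- Let h₁, h₂ : ℂ → ℂ with h₂(μᵢ) ≠ 0 and h₂(σⱼ) ≠ 0 and h₂(μᵢ)h₁(σⱼ) ≠ h₁(μᵢ)h₂(σⱼ). The generalized Loewner entry Ã₁_{ij} = (h₂(μᵢ) fᵢᵀrⱼ − ℓᵢᵀgⱼ h₂(σⱼ)) / (h₂(μᵢ)h₁(σⱼ) − h₁(μᵢ)h₂(σⱼ)) equals minus the standard Loewner entry built from the transformed data with points h₁(μᵢ)/h₂(μᵢ) and h₁(σⱼ)/h₂(σⱼ), left direction ℓᵢ/h₂(μᵢ), right direction rⱼ/h₂(σⱼ), and the same values fᵢ, gⱼ; i.e., Ã₁_{ij} = −(fᵢᵀ(rⱼ/h₂(σⱼ)) − (ℓᵢ/h₂(μᵢ))ᵀ gⱼ) / (h₁(μᵢ)/h₂(μᵢ) − h₁(σⱼ)/h₂(σⱼ)).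 -/
open Matrix

theorem Matrix.dotProduct_div_const {ι K : Type*} [Fintype ι] [DivisionSemiring K]
    (v w : ι → K) (c : K) : (v ⬝ᵥ fun j => w j / c) = (v ⬝ᵥ w) / c := by
  simp only [dotProduct, ← mul_div_assoc, Finset.sum_div]

theorem Matrix.div_const_dotProduct {ι K : Type*} [Fintype ι] [Semifield K]
    (v w : ι → K) (c : K) : ((fun i => v i / c) ⬝ᵥ w) = (v ⬝ᵥ w) / c := by
  simp only [dotProduct, div_mul_eq_mul_div, Finset.sum_div]

theorem div_sub_div_div_div_sub_div {K : Type*} [Field K] {y₁ y₂ : K} (hy₁ : y₁ ≠ 0)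
    (hy₂ : y₂ ≠ 0) (a b x₁ x₂ : K) :
    (a / y₂ - b / y₁) / (x₁ / y₁ - x₂ / y₂) = -((y₁ * a - b * y₂) / (y₁ * x₂ - x₁ * y₂)) := by
  rw [div_sub_div _ _ hy₂ hy₁, div_sub_div _ _ hy₁ hy₂, mul_comm y₂ y₁,
    div_div_div_cancel_right₀ (mul_ne_zero hy₁ hy₂), ← div_neg, neg_sub]
  ring

theorem stmt11_general {m p : ℕ} (h₁ h₂ : ℂ → ℂ) (μ σ : ℂ)
    (f r : Fin m → ℂ) (l g : Fin p → ℂ)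
    (h2μ : h₂ μ ≠ 0) (h2σ : h₂ σ ≠ 0) :
    (h₂ μ * (f ⬝ᵥ r) - (l ⬝ᵥ g) * h₂ σ) / (h₂ μ * h₁ σ - h₁ μ * h₂ σ) =
      -(((f ⬝ᵥ fun j => r j / h₂ σ) - ((fun j => l j / h₂ μ) ⬝ᵥ g)) /
        (h₁ μ / h₂ μ - h₁ σ / h₂ σ)) := by
  rw [dotProduct_div_const, div_const_dotProduct, div_sub_div_div_div_sub_div h2μ h2σ, neg_neg]

/-- The generalized Loewner entry equals minus the standard Loewner entry
built from the transformed data. -/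
theorem stmt11 {m p : ℕ} (h₁ h₂ : ℂ → ℂ) (μ σ : ℂ)
    (f r : Fin m → ℂ) (l g : Fin p → ℂ)
    (h2μ : h₂ μ ≠ 0) (h2σ : h₂ σ ≠ 0) (hμσ : μ ≠ σ)
    (hden : h₂ μ * h₁ σ ≠ h₁ μ * h₂ σ) :
    (h₂ μ * (f ⬝ᵥ r) - (l ⬝ᵥ g) * h₂ σ) / (h₂ μ * h₁ σ - h₁ μ * h₂ σ) =
      -(((f ⬝ᵥ fun j => r j / h₂ σ) - ((fun j => l j / h₂ μ) ⬝ᵥ g)) /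
        (h₁ μ / h₂ μ - h₁ σ / h₂ σ)) :=
  stmt11_general h₁ h₂ μ σ f r l g h2μ h2σ
end

section
/- Let K̃(s) = Σ_k h_k(s) Ã_k with continuously differentiable h_k, invertible at μᵢ for i = 1,…,n, and H̃(s) = C̃ K̃(s)⁻¹ B̃. Then the Hermite conditions ℓᵢᵀ H̃(μᵢ) = fᵢᵀ and ℓᵢᵀ H̃′(μᵢ) = (fᵢ′)ᵀ hold for all i if and only if there exist matrices P_F, P_{F′} ∈ ℂ^{n×n} satisfying Fᵀ = P_Fᵀ B̃, Σ_k h_k(M) P_Fᵀ Ã_k = Lᵀ C̃, (F′)ᵀ = P_{F′}ᵀ B̃, and Σ_k h_k(M) P_{F′}ᵀ Ã_k = −Σ_k h_k′(M) P_Fᵀ Ã_k. -/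
/-!
Row `i` of `∑ k, h_k(M) Pᵀ Ã_k` is `Pᵀ i ᵥ* K̃(μᵢ)`, so all four matrix equations decouple into
conditions on single rows. Since `K̃(μᵢ)` is invertible, `x ᵥ* K̃(μᵢ) = ℓᵢ ᵥ* C̃` forces
`x = ℓᵢ ᵥ* C̃ K̃(μᵢ)⁻¹`, and then `x' ᵥ* K̃(μᵢ) = -(x ᵥ* K̃′(μᵢ))` forces
`x' = -(ℓᵢ ᵥ* C̃ K̃(μᵢ)⁻¹ K̃′(μᵢ) K̃(μᵢ)⁻¹)`; with these rows, `x ᵥ* B̃` and `x' ᵥ* B̃` are exactly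
`ℓᵢᵀ H̃(μᵢ)` and `ℓᵢᵀ H̃′(μᵢ)`.
-/

open Matrix BigOperators

namespace Matrix

theorem eq_iff_forall_row_eq {α ι κ : Type*} {M N : Matrix ι κ α} : M = N ↔ ∀ i, M i = N i :=
  funext_iff

theorem exists_transpose_rows_iff {R ι κ : Type*} {P : ι → (κ → R) → (κ → R) → Prop} :
    (∃ X X' : Matrix κ ι R, ∀ i, P i (Xᵀ i) (X'ᵀ i)) ↔ ∀ i, ∃ x x', P i x x' := by
  refine ⟨fun ⟨X, X', hX⟩ i => ⟨_, _, hX i⟩, fun h => ?_⟩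
  choose x x' hx using h
  exact ⟨(of x)ᵀ, (of x')ᵀ, hx⟩

variable {R : Type*} [CommRing R] {ι κ ν ρ : Type*} [Fintype ι] [DecidableEq ι]

theorem row_sum_diagonal_mul_mul [Fintype ρ] [Fintype κ] (c : ρ → ι → R) (P : Matrix ι κ R)
    (A : ρ → Matrix κ ν R) (i : ι) :
    (∑ k, diagonal (c k) * P * A k) i = P i ᵥ* ∑ k, c k i • A k := by
  rw [vecMul_sum]
  refine (Finset.sum_apply (M := fun _ => ν → R) i _ _).trans (Finset.sum_congr rfl fun k _ => ?_)
  have hrow : (diagonal (c k) * P) i = c k i • P i := by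
    ext j; simp [diagonal_mul]
  rw [mul_apply_eq_vecMul, hrow, smul_vecMul, vecMul_smul]

theorem vecMul_eq_iff_eq_vecMul_nonsing_inv_s15 {K : Matrix ι ι R} (hK : IsUnit K.det) (x y : ι → R) :
    x ᵥ* K = y ↔ x = y ᵥ* K⁻¹ := by
  constructor
  · rintro rfl
    rw [vecMul_vecMul, mul_nonsing_inv K hK, vecMul_one]
  · rintro rfl
    rw [vecMul_vecMul, nonsing_inv_mul K hK, vecMul_one]

theorem hermite_conditions_iff_exists [Fintype κ] {K : Matrix ι ι R} (hK : IsUnit K.det)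
    (K' : Matrix ι ι R) (B : Matrix ι ν R) (C : Matrix κ ι R) (ℓ : κ → R) (f f' : ν → R) :
    (ℓ ᵥ* (C * K⁻¹ * B) = f ∧ ℓ ᵥ* (-(C * K⁻¹ * K' * K⁻¹ * B)) = f') ↔
      ∃ x x' : ι → R, f = x ᵥ* B ∧ x ᵥ* K = ℓ ᵥ* C ∧ f' = x' ᵥ* B ∧ x' ᵥ* K = -(x ᵥ* K') := by
  simp only [vecMul_eq_iff_eq_vecMul_nonsing_inv_s15 hK]
  constructor
  · rintro ⟨rfl, rfl⟩
    refine ⟨_, _, ?_, rfl, ?_, rfl⟩ <;>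
      simp only [vecMul_vecMul, neg_vecMul, vecMul_neg, Matrix.mul_assoc]
  · rintro ⟨x, x', rfl, rfl, rfl, rfl⟩
    constructor <;> simp only [vecMul_vecMul, neg_vecMul, vecMul_neg, Matrix.mul_assoc]

end Matrix

theorem stmt15_general {n m p K : ℕ} (h hd : Fin K → ℂ → ℂ)
    (A : Fin K → Matrix (Fin n) (Fin n) ℂ)
    (B : Matrix (Fin n) (Fin m) ℂ) (C : Matrix (Fin p) (Fin n) ℂ)
    (μ : Fin n → ℂ)
    (L : Matrix (Fin p) (Fin n) ℂ) (F F' : Matrix (Fin m) (Fin n) ℂ)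
    (hinv : ∀ i, IsUnit (∑ k, h k (μ i) • A k).det) :
    ((∀ i, (Lᵀ i) ᵥ* (C * (∑ k, h k (μ i) • A k)⁻¹ * B) = Fᵀ i) ∧
     (∀ i, (Lᵀ i) ᵥ*
        (-(C * (∑ k, h k (μ i) • A k)⁻¹ * (∑ k, hd k (μ i) • A k) *
            (∑ k, h k (μ i) • A k)⁻¹ * B)) = F'ᵀ i)) ↔
      (∃ PF PF' : Matrix (Fin n) (Fin n) ℂ,
        Fᵀ = PFᵀ * B ∧
        (∑ k, Matrix.diagonal (fun i => h k (μ i)) * PFᵀ * A k = Lᵀ * C) ∧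
        F'ᵀ = PF'ᵀ * B ∧
        (∑ k, Matrix.diagonal (fun i => h k (μ i)) * PF'ᵀ * A k =
          -∑ k, Matrix.diagonal (fun i => hd k (μ i)) * PFᵀ * A k)) := by
  rw [← forall_and, forall_congr' fun i => hermite_conditions_iff_exists (hinv i)
    (∑ k, hd k (μ i) • A k) B C (Lᵀ i) (Fᵀ i) (F'ᵀ i), ← exists_transpose_rows_iff]
  have neg_row : ∀ (S : Matrix (Fin n) (Fin n) ℂ) i, (-S) i = -S i := fun _ _ => rfl
  simp only [eq_iff_forall_row_eq, forall_and, mul_apply_eq_vecMul, row_sum_diagonal_mul_mul,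
    neg_row]

/-- Characterization of left Hermite interpolation for a structured realization. -/
theorem stmt15 {n m p K : ℕ} (h hd : Fin K → ℂ → ℂ)
    (hderiv : ∀ k s, HasDerivAt (h k) (hd k s) s)
    (A : Fin K → Matrix (Fin n) (Fin n) ℂ)
    (B : Matrix (Fin n) (Fin m) ℂ) (C : Matrix (Fin p) (Fin n) ℂ)
    (μ : Fin n → ℂ)
    (L : Matrix (Fin p) (Fin n) ℂ) (F F' : Matrix (Fin m) (Fin n) ℂ)
    (hinv : ∀ i, IsUnit (∑ k, h k (μ i) • A k).det) :
    ((∀ i, (Lᵀ i) ᵥ* (C * (∑ k, h k (μ i) • A k)⁻¹ * B) = Fᵀ i) ∧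
     (∀ i, (Lᵀ i) ᵥ*
        (-(C * (∑ k, h k (μ i) • A k)⁻¹ * (∑ k, hd k (μ i) • A k) *
            (∑ k, h k (μ i) • A k)⁻¹ * B)) = F'ᵀ i)) ↔
      (∃ PF PF' : Matrix (Fin n) (Fin n) ℂ,
        Fᵀ = PFᵀ * B ∧
        (∑ k, Matrix.diagonal (fun i => h k (μ i)) * PFᵀ * A k = Lᵀ * C) ∧
        F'ᵀ = PF'ᵀ * B ∧
        (∑ k, Matrix.diagonal (fun i => h k (μ i)) * PF'ᵀ * A k =
          -∑ k, Matrix.diagonal (fun i => hd k (μ i)) * PFᵀ * A k)) :=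
  stmt15_general h hd A B C μ L F F' hinv
end

section
/- Let K(s) = Σ_{k=1}^{2} h_k(s) A_k (K = 2 case) with projection matrices W, V as above satisfying Σ_k h_k(M) Wᵀ A_k = Lᵀ C and Σ_k A_k V h_k(S) = B R. Suppose Ã₁ ∈ ℂ^{n×n} satisfies the Sylvester-like equation h₂(M) Ã₁ h₁(S) − h₁(M) Ã₁ h₂(S) = h₂(M) Wᵀ B R − Lᵀ C V h₂(S), and suppose the sets {μᵢ} and {σⱼ} are such that h₂(μᵢ)h₁(σⱼ) − h₁(μᵢ)h₂(σⱼ) ≠ 0 for all i, j. Then Ã₁ = Wᵀ A₁ V. -/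
/-!
The projected matrix `Wᵀ A₁ V` solves the same Sylvester-like equation as `Ã₁`: substitute the
right interpolation condition into `h₂(M) Wᵀ A₁ V h₁(S)` and the left one into
`h₁(M) Wᵀ A₁ V h₂(S)`; the `A₂` terms cancel. Since `h₁(M), h₂(M), h₁(S), h₂(S)` are diagonal,
the equation acts on the `(i, j)` entry as multiplication by `h₂(μᵢ)h₁(σⱼ) − h₁(μᵢ)h₂(σⱼ)`,
so it has at most one solution.
-/

open Matrix BigOperators

namespace Matrix

variable {α ι κ κ' m p : Type*} [Fintype ι] [Fintype κ] [Fintype κ'] [Fintype m] [Fintype p]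

theorem sylvester_projection_of_interpolation [Ring α]
    {P₁ P₂ : Matrix κ κ α} {Q₁ Q₂ : Matrix κ' κ' α} {A₁ A₂ : Matrix ι ι α}
    {B : Matrix ι m α} {C : Matrix p ι α} {L : Matrix p κ α} {R : Matrix m κ' α}
    {W : Matrix ι κ α} {V : Matrix ι κ' α}
    (hW : P₁ * Wᵀ * A₁ + P₂ * Wᵀ * A₂ = Lᵀ * C)
    (hV : A₁ * V * Q₁ + A₂ * V * Q₂ = B * R) :
    P₂ * (Wᵀ * A₁ * V) * Q₁ - P₁ * (Wᵀ * A₁ * V) * Q₂ =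
      P₂ * (Wᵀ * B) * R - Lᵀ * (C * V) * Q₂ :=
  calc P₂ * (Wᵀ * A₁ * V) * Q₁ - P₁ * (Wᵀ * A₁ * V) * Q₂
      = P₂ * Wᵀ * (A₁ * V * Q₁) - (P₁ * Wᵀ * A₁) * (V * Q₂) := by
        simp only [Matrix.mul_assoc]
    _ = P₂ * Wᵀ * (B * R - A₂ * V * Q₂) - (Lᵀ * C - P₂ * Wᵀ * A₂) * (V * Q₂) := by
        rw [eq_sub_of_add_eq hV, eq_sub_of_add_eq hW]
    _ = P₂ * (Wᵀ * B) * R - Lᵀ * (C * V) * Q₂ := by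
        simp only [Matrix.mul_sub, Matrix.sub_mul, Matrix.mul_assoc]
        abel

variable [DecidableEq κ] [DecidableEq κ']

theorem diagonal_sylvester_apply [CommRing α] (a c : κ → α) (b d : κ' → α)
    (X : Matrix κ κ' α) (i : κ) (j : κ') :
    (diagonal a * X * diagonal b - diagonal c * X * diagonal d) i j =
      (a i * b j - c i * d j) * X i j := by
  simp only [sub_apply, mul_diagonal, diagonal_mul]
  ring

theorem eq_of_diagonal_sylvester [CommRing α] [NoZeroDivisors α]
    {a c : κ → α} {b d : κ' → α} (hden : ∀ i j, a i * b j - c i * d j ≠ 0)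
    {X Y : Matrix κ κ' α}
    (h : diagonal a * X * diagonal b - diagonal c * X * diagonal d =
      diagonal a * Y * diagonal b - diagonal c * Y * diagonal d) :
    X = Y := by
  ext i j
  have hij := congrFun (congrFun h i) j
  rw [diagonal_sylvester_apply, diagonal_sylvester_apply] at hij
  exact mul_left_cancel₀ (hden i j) hij

end Matrix

/-- For `K = 2` the data-driven structured realization coincides with the
projection-based reduced model. -/
theorem stmt17 {N n m p : ℕ} (h₁ h₂ : ℂ → ℂ)
    (A₁ A₂ : Matrix (Fin N) (Fin N) ℂ)
    (B : Matrix (Fin N) (Fin m) ℂ) (C : Matrix (Fin p) (Fin N) ℂ)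
    (μ σ : Fin n → ℂ)
    (L : Matrix (Fin p) (Fin n) ℂ) (R : Matrix (Fin m) (Fin n) ℂ)
    (W V : Matrix (Fin N) (Fin n) ℂ)
    (hWproj : Matrix.diagonal (fun i => h₁ (μ i)) * Wᵀ * A₁ +
        Matrix.diagonal (fun i => h₂ (μ i)) * Wᵀ * A₂ = Lᵀ * C)
    (hVproj : A₁ * V * Matrix.diagonal (fun i => h₁ (σ i)) +
        A₂ * V * Matrix.diagonal (fun i => h₂ (σ i)) = B * R)
    (At1 : Matrix (Fin n) (Fin n) ℂ)
    (hSylv : Matrix.diagonal (fun i => h₂ (μ i)) * At1 * Matrix.diagonal (fun i => h₁ (σ i)) -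
        Matrix.diagonal (fun i => h₁ (μ i)) * At1 * Matrix.diagonal (fun i => h₂ (σ i)) =
      Matrix.diagonal (fun i => h₂ (μ i)) * (Wᵀ * B) * R -
        Lᵀ * (C * V) * Matrix.diagonal (fun i => h₂ (σ i)))
    (hden : ∀ i j, h₂ (μ i) * h₁ (σ j) - h₁ (μ i) * h₂ (σ j) ≠ 0) :
    At1 = Wᵀ * A₁ * V :=
  eq_of_diagonal_sylvester hden
    (hSylv.trans (sylvester_projection_of_interpolation hWproj hVproj).symm)
end
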